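/- Let (𝔘, G, α) be a C*-dynamical system and ω a state such that for some net g^i, lim_i (ω(α_{g^i}(A)B) − ω(α_{g^i}A)ω(B)) = 0 for all A, B ∈ 𝔘. Then for every n ≥ 2, the free cumulants satisfy lim_i κ_n(α_{g^i}A_1, A_2, ..., A_n) = 0 and lim_i κ_n(A_1, ..., A_{n-1}, α_{g^i}A_n) = 0 for all A_1,...,A_n ∈ 𝔘. -/

import Mathlib

open scoped Classical
open Filter Topology

noncomputable section

/-- `π` is a set-partition of the finite set `S ⊆ ℕ`: a collection of nonempty subsets of `S`
such that every element of `S` lies in exactly one of them. -/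
def IsSetPartition (S : Finset ℕ) (π : Finset (Finset ℕ)) : Prop :=
  (∀ V ∈ π, V ⊆ S) ∧ (∀ V ∈ π, V.Nonempty) ∧ ∀ a ∈ S, ∃! V, V ∈ π ∧ a ∈ V

/-- The finset of all set-partitions of `S`. -/
def setPartitions (S : Finset ℕ) : Finset (Finset (Finset ℕ)) :=
  S.powerset.powerset.filter (IsSetPartition S)

/-- A family of blocks is non-crossing if there are no `a < b < c < d` with `a, c` in one
block and `b, d` in a different block. -/
def IsNonCrossing (π : Finset (Finset ℕ)) : Prop :=
  ¬ ∃ a b c d : ℕ, a < b ∧ b < c ∧ c < d ∧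
      ∃ V ∈ π, ∃ W ∈ π, V ≠ W ∧ a ∈ V ∧ c ∈ V ∧ b ∈ W ∧ d ∈ W

/-- The finset of all non-crossing partitions of `S`. -/
def ncPartitions (S : Finset ℕ) : Finset (Finset (Finset ℕ)) :=
  (setPartitions S).filter IsNonCrossing

variable {𝔘 : Type*}

/-- The ordered list `A_{i_1}, …, A_{i_s}` of observables indexed by `V = {i_1 < ⋯ < i_s}`. -/
def blockList (A : ℕ → 𝔘) (V : Finset ℕ) : List 𝔘 :=
  (V.sort (· ≤ ·)).map A

/-- The ordered product `A_{i_1} ⋯ A_{i_s}` over the block `V = {i_1 < ⋯ < i_s}`. -/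
def blockProd [Monoid 𝔘] (A : ℕ → 𝔘) (V : Finset ℕ) : 𝔘 :=
  (blockList A V).prod

/-- The joint classical cumulant of `ω` of the observables `A_i`, `i ∈ S` (order preserved):
`c(S) = ∑_{π ∈ P(S)} (-1)^{|π|-1}(|π|-1)! ∏_{V ∈ π} ω(∏_{i ∈ V} A_i)`. -/
def cumulant [Monoid 𝔘] (ω : 𝔘 → ℂ) (A : ℕ → 𝔘) (S : Finset ℕ) : ℂ :=
  ∑ π ∈ setPartitions S,
    (-1 : ℂ) ^ (π.card - 1) * ((π.card - 1).factorial : ℂ) * ∏ V ∈ π, ω (blockProd A V)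

/-- `κ` (as a function of the ordered list of observables) is the family of free cumulants of
`ω`: it satisfies the moments-to-free-cumulants formula over non-crossing partitions. -/
def IsFreeCumulantFamily [Monoid 𝔘] (ω : 𝔘 → ℂ) (κ : List 𝔘 → ℂ) : Prop :=
  ∀ (A : ℕ → 𝔘) (S : Finset ℕ), S.Nonempty →
    ω (blockProd A S) = ∑ π ∈ ncPartitions S, ∏ V ∈ π, κ (blockList A V)

/-- A state on a unital C*-algebra: a positive unital linear functional. -/
structure IsState [NormedRing 𝔘] [StarRing 𝔘] [NormedAlgebra ℂ 𝔘] (ω : 𝔘 →ₗ[ℂ] ℂ) : Prop where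
  unital : ω 1 = 1
  positive : ∀ a : 𝔘, 0 ≤ (ω (star a * a)).re ∧ (ω (star a * a)).im = 0

/-- `α` is a representation of the group `G` by *-automorphisms. -/
def IsStarAutoRep {G : Type*} [Monoid G] [Ring 𝔘] [Algebra ℂ 𝔘] [StarRing 𝔘]
    (α : G → 𝔘 ≃⋆ₐ[ℂ] 𝔘) : Prop :=
  ∀ (g h : G) (x : 𝔘), α (g * h) x = α g (α h x)

/-!
Fix the translated index `m` and induct on the size of a block `V ∋ m`. In the
moment-cumulant formula for `ω(∏_V)`, the non-crossing partitions having `{m}` as a block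
contribute `ω(α A_m) ω(∏_{V∖m})`, and by clustering this is asymptotically all of `ω(∏_V)`.
Of the remaining partitions, `{V}` contributes `κ_V`; every other one has a strictly smaller
block through `m` of size at least two, whose cumulant vanishes in the limit by induction, while
its other blocks do not depend on the translation. Hence `κ_V → 0`. For `m = n` the translated
factor sits on the right, and clustering on that side follows from `ω(x⋆) = conj (ω x)`.
-/

namespace IsSetPartition

variable {S : Finset ℕ} {π : Finset (Finset ℕ)}

lemma eq_of_mem_of_mem (h : IsSetPartition S π) {W W' : Finset ℕ} {a : ℕ}
    (hW : W ∈ π) (hW' : W' ∈ π) (haW : a ∈ W) (haW' : a ∈ W') : W = W' :=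
  (h.2.2 a (h.1 W hW haW)).unique ⟨hW, haW⟩ ⟨hW', haW'⟩

lemma eq_singleton_of_mem (h : IsSetPartition S π) (hS : S ∈ π) : π = {S} := by
  refine Finset.eq_singleton_iff_unique_mem.mpr ⟨hS, fun W hW => ?_⟩
  obtain ⟨x, hx⟩ := h.2.1 W hW
  exact h.eq_of_mem_of_mem hW hS hx (h.1 W hW hx)

lemma exists_mem_ssubset_two_le_card (h : IsSetPartition S π) {m : ℕ} (hm : m ∈ S)
    (hπS : π ≠ {S}) (hmπ : {m} ∉ π) : ∃ W ∈ π, m ∈ W ∧ W ⊂ S ∧ 2 ≤ W.card := by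
  obtain ⟨W, ⟨hWπ, hmW⟩, -⟩ := h.2.2 m hm
  refine ⟨W, hWπ, hmW, Finset.ssubset_iff_subset_ne.mpr
    ⟨h.1 W hWπ, fun hWS => hπS (h.eq_singleton_of_mem (hWS ▸ hWπ))⟩, ?_⟩
  by_contra! hW
  refine hmπ (Finset.eq_singleton_iff_unique_mem.mpr ⟨hmW, fun x hx => ?_⟩ ▸ hWπ)
  exact Finset.card_le_one.mp (by omega) x hx m hmW

end IsSetPartition

lemma IsNonCrossing.mono {π σ : Finset (Finset ℕ)} (h : IsNonCrossing π) (hσ : σ ⊆ π) :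
    IsNonCrossing σ := by
  rintro ⟨a, b, c, d, hab, hbc, hcd, V, hV, W, hW, hVW, haV, hcV, hbW, hdW⟩
  exact h ⟨a, b, c, d, hab, hbc, hcd, V, hσ hV, W, hσ hW, hVW, haV, hcV, hbW, hdW⟩

lemma mem_ncPartitions {S : Finset ℕ} {π : Finset (Finset ℕ)} :
    π ∈ ncPartitions S ↔ IsSetPartition S π ∧ IsNonCrossing π := by
  refine Finset.mem_filter.trans (and_congr_left fun _ => Finset.mem_filter.trans ?_)
  refine ⟨And.right, fun h => ⟨?_, h⟩⟩
  exact Finset.mem_powerset.mpr fun V hV => Finset.mem_powerset.mpr (h.1 V hV)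

lemma singleton_mem_ncPartitions {S : Finset ℕ} (hS : S.Nonempty) : {S} ∈ ncPartitions S := by
  refine mem_ncPartitions.mpr ⟨⟨?_, ?_, fun a ha => ⟨S, by simp [ha], ?_⟩⟩, ?_⟩
  · simp
  · simpa using hS
  · simp
  · rintro ⟨a, b, c, d, -, -, -, V, hV, W, hW, hVW, -⟩
    simp_all

lemma ncPartitions_singleton (m : ℕ) : ncPartitions {m} = {{{m}}} := by
  refine Finset.eq_singleton_iff_unique_mem.mpr
    ⟨singleton_mem_ncPartitions (Finset.singleton_nonempty m), fun π hπ => ?_⟩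
  obtain ⟨hsp, -⟩ := mem_ncPartitions.mp hπ
  obtain ⟨V, ⟨hVπ, hmV⟩, -⟩ := hsp.2.2 m (Finset.mem_singleton_self m)
  have hV : V = {m} := Finset.Subset.antisymm (hsp.1 V hVπ) (Finset.singleton_subset_iff.mpr hmV)
  exact hsp.eq_singleton_of_mem (hV ▸ hVπ)

section SingletonBlock

variable {S : Finset ℕ} {m : ℕ}

lemma erase_singleton_mem_ncPartitions {π : Finset (Finset ℕ)} (hπ : π ∈ ncPartitions S)
    (hm : {m} ∈ π) : π.erase {m} ∈ ncPartitions (S.erase m) := by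
  obtain ⟨hsp, hnc⟩ := mem_ncPartitions.mp hπ
  have hmV : ∀ V ∈ π.erase {m}, m ∉ V := fun V hV hmV =>
    Finset.ne_of_mem_erase hV <|
      hsp.eq_of_mem_of_mem (Finset.mem_of_mem_erase hV) hm hmV (Finset.mem_singleton_self m)
  refine mem_ncPartitions.mpr ⟨⟨fun V hV x hx => ?_, fun V hV => ?_, fun a ha => ?_⟩,
    hnc.mono (Finset.erase_subset _ _)⟩
  · exact Finset.mem_erase.mpr
      ⟨fun h => hmV V hV (h ▸ hx), hsp.1 V (Finset.mem_of_mem_erase hV) hx⟩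
  · exact hsp.2.1 V (Finset.mem_of_mem_erase hV)
  · obtain ⟨ham, haS⟩ := Finset.mem_erase.mp ha
    obtain ⟨V, ⟨hVπ, haV⟩, hu⟩ := hsp.2.2 a haS
    refine ⟨V, ⟨Finset.mem_erase.mpr ⟨?_, hVπ⟩, haV⟩, fun W hW => hu W ⟨?_, hW.2⟩⟩
    · rintro rfl
      exact ham (Finset.mem_singleton.mp haV)
    · exact Finset.mem_of_mem_erase hW.1

lemma insert_singleton_mem_ncPartitions {σ : Finset (Finset ℕ)} (hm : m ∈ S)
    (hσ : σ ∈ ncPartitions (S.erase m)) : insert {m} σ ∈ ncPartitions S := by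
  obtain ⟨hsp, hnc⟩ := mem_ncPartitions.mp hσ
  have hmV : ∀ V ∈ σ, m ∉ V := fun V hV hmV => (Finset.mem_erase.mp (hsp.1 V hV hmV)).1 rfl
  refine mem_ncPartitions.mpr ⟨⟨?_, ?_, fun a ha => ?_⟩, ?_⟩
  · simpa [Finset.insert_subset_iff, hm] using fun V hV =>
      (hsp.1 V hV).trans (Finset.erase_subset m S)
  · simpa using hsp.2.1
  · by_cases ham : a = m
    · subst ham
      refine ⟨{a}, by simp, fun W ⟨hW, haW⟩ => ?_⟩
      rcases Finset.mem_insert.mp hW with rfl | hW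
      · rfl
      · exact absurd haW (hmV W hW)
    · obtain ⟨V, ⟨hVσ, haV⟩, hu⟩ := hsp.2.2 a (Finset.mem_erase.mpr ⟨ham, ha⟩)
      refine ⟨V, ⟨Finset.mem_insert_of_mem hVσ, haV⟩, fun W ⟨hW, haW⟩ => ?_⟩
      rcases Finset.mem_insert.mp hW with rfl | hW
      · exact absurd (Finset.mem_singleton.mp haW) ham
      · exact hu W ⟨hW, haW⟩
  · rintro ⟨a, b, c, d, hab, hbc, hcd, V, hV, W, hW, hVW, haV, hcV, hbW, hdW⟩
    rcases Finset.mem_insert.mp hV with rfl | hV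
    · simp only [Finset.mem_singleton] at haV hcV
      omega
    rcases Finset.mem_insert.mp hW with rfl | hW
    · simp only [Finset.mem_singleton] at hbW hdW
      omega
    exact hnc ⟨a, b, c, d, hab, hbc, hcd, V, hV, W, hW, hVW, haV, hcV, hbW, hdW⟩

lemma sum_filter_singleton_mem_ncPartitions {R : Type*} [CommSemiring R] (hm : m ∈ S)
    (F : Finset ℕ → R) :
    ∑ π ∈ (ncPartitions S).filter (fun π => {m} ∈ π), ∏ V ∈ π, F V
      = F {m} * ∑ σ ∈ ncPartitions (S.erase m), ∏ V ∈ σ, F V := by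
  rw [Finset.mul_sum]
  refine Finset.sum_bij' (fun π _ => π.erase {m}) (fun σ _ => insert {m} σ)
    (fun π hπ => ?_) (fun σ hσ => ?_) (fun π hπ => ?_) (fun σ hσ => ?_) (fun π hπ => ?_)
  · obtain ⟨hπ, hmπ⟩ := Finset.mem_filter.mp hπ
    exact erase_singleton_mem_ncPartitions hπ hmπ
  · exact Finset.mem_filter.mpr
      ⟨insert_singleton_mem_ncPartitions hm hσ, Finset.mem_insert_self _ _⟩
  · exact Finset.insert_erase (Finset.mem_filter.mp hπ).2
  · refine Finset.erase_insert fun h => ?_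
    have := (mem_ncPartitions.mp hσ).1.1 _ h (Finset.mem_singleton_self m)
    exact (Finset.mem_erase.mp this).1 rfl
  · exact (Finset.mul_prod_erase π F (Finset.mem_filter.mp hπ).2).symm

end SingletonBlock

section Blocks

lemma blockList_congr {A A' : ℕ → 𝔘} {V : Finset ℕ} (h : ∀ x ∈ V, A x = A' x) :
    blockList A V = blockList A' V :=
  List.map_congr_left fun x hx => h x ((Finset.mem_sort _).mp hx)

lemma blockList_update_of_notMem (A : ℕ → 𝔘) {m : ℕ} (a : 𝔘) {V : Finset ℕ} (hm : m ∉ V) :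
    blockList (Function.update A m a) V = blockList A V :=
  blockList_congr fun _ hx => Function.update_of_ne (ne_of_mem_of_not_mem hx hm) _ _

lemma blockList_singleton (A : ℕ → 𝔘) (m : ℕ) : blockList A {m} = [A m] := by
  simp [blockList]

lemma sort_eq_cons_erase {V : Finset ℕ} {m : ℕ} (hm : m ∈ V) (h : ∀ x ∈ V, m ≤ x) :
    V.sort (· ≤ ·) = m :: (V.erase m).sort (· ≤ ·) := by
  conv_lhs => rw [← Finset.insert_erase hm]
  exact Finset.sort_insert _ (fun b hb => h b (Finset.mem_of_mem_erase hb))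
    (Finset.notMem_erase m V)

lemma sort_eq_erase_append {V : Finset ℕ} {m : ℕ} (hm : m ∈ V) (h : ∀ x ∈ V, x ≤ m) :
    V.sort (· ≤ ·) = (V.erase m).sort (· ≤ ·) ++ [m] := by
  refine List.Perm.eq_of_pairwise' (r := (· ≤ ·)) (Finset.pairwise_sort _ _) ?_ ?_
  · refine List.pairwise_append.mpr ⟨Finset.pairwise_sort _ _, List.pairwise_singleton _ m, ?_⟩
    rintro a ha b hb
    rw [List.mem_singleton.mp hb]
    exact h a (Finset.mem_of_mem_erase ((Finset.mem_sort _).mp ha))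
  · rw [← Multiset.coe_eq_coe, ← Multiset.coe_add, Finset.sort_eq, Finset.sort_eq,
      Finset.erase_val, Multiset.coe_singleton, add_comm, Multiset.singleton_add,
      Multiset.cons_erase hm]

variable [Monoid 𝔘]

lemma blockProd_update_of_forall_le (A : ℕ → 𝔘) (a : 𝔘) {V : Finset ℕ} {m : ℕ} (hm : m ∈ V)
    (h : ∀ x ∈ V, m ≤ x) :
    blockProd (Function.update A m a) V = a * blockProd A (V.erase m) := by
  rw [blockProd, blockProd, blockList, sort_eq_cons_erase hm h, List.map_cons, List.prod_cons,
    Function.update_self, ← blockList, blockList_update_of_notMem A a (Finset.notMem_erase m V)]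

lemma blockProd_update_of_forall_ge (A : ℕ → 𝔘) (a : 𝔘) {V : Finset ℕ} {m : ℕ} (hm : m ∈ V)
    (h : ∀ x ∈ V, x ≤ m) :
    blockProd (Function.update A m a) V = blockProd A (V.erase m) * a := by
  rw [blockProd, blockProd, blockList, sort_eq_erase_append hm h, List.map_append,
    List.prod_append, ← blockList, blockList_update_of_notMem A a (Finset.notMem_erase m V)]
  simp

end Blocks

namespace IsFreeCumulantFamily

variable [Monoid 𝔘] {ω : 𝔘 → ℂ} {κ : List 𝔘 → ℂ}

lemma apply_singleton (hκ : IsFreeCumulantFamily ω κ) (a : 𝔘) : κ [a] = ω a := by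
  have h := hκ (fun _ => a) {0} (Finset.singleton_nonempty 0)
  simpa [ncPartitions_singleton, blockProd, blockList_singleton] using h.symm

lemma moment_update_sub_eq_sum (hκ : IsFreeCumulantFamily ω κ) (A : ℕ → 𝔘) (a : 𝔘)
    {m : ℕ} {V : Finset ℕ} (hm : m ∈ V) (hV : (V.erase m).Nonempty) :
    ω (blockProd (Function.update A m a) V) - ω a * ω (blockProd A (V.erase m))
      = ∑ π ∈ (ncPartitions V).filter (fun π => {m} ∉ π),
          ∏ W ∈ π, κ (blockList (Function.update A m a) W) := by
  have hrest : ∑ σ ∈ ncPartitions (V.erase m), ∏ W ∈ σ, κ (blockList (Function.update A m a) W)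
      = ω (blockProd A (V.erase m)) := by
    rw [hκ A _ hV]
    refine Finset.sum_congr rfl fun σ hσ => Finset.prod_congr rfl fun W hW => ?_
    have hmW : m ∉ W := fun h =>
      Finset.notMem_erase m V ((mem_ncPartitions.mp hσ).1.1 W hW h)
    rw [blockList_update_of_notMem A a hmW]
  rw [hκ _ V ⟨m, hm⟩, ← Finset.sum_filter_add_sum_filter_not _ (fun π => {m} ∈ π),
    sum_filter_singleton_mem_ncPartitions hm, hrest, blockList_singleton, Function.update_self,
    hκ.apply_singleton, add_sub_cancel_left]

theorem tendsto_cumulant_update (hκ : IsFreeCumulantFamily ω κ) {ι : Type*} (l : Filter ι)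
    (A : ℕ → 𝔘) (a : ι → 𝔘) (m : ℕ) (T : Finset ℕ)
    (hcl : ∀ V ⊆ T, m ∈ V → Tendsto (fun i => ω (blockProd (Function.update A m (a i)) V)
      - ω (a i) * ω (blockProd A (V.erase m))) l (𝓝 0))
    (V : Finset ℕ) (hVT : V ⊆ T) (hm : m ∈ V) (hV : 2 ≤ V.card) :
    Tendsto (fun i => κ (blockList (Function.update A m (a i)) V)) l (𝓝 0) := by
  induction V using Finset.strongInduction with
  | H V IH =>
    have hVm : V ≠ {m} := by
      rintro rfl
      simp at hV
    set P := (ncPartitions V).filter (fun π => {m} ∉ π)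
    have hfull : {V} ∈ P :=
      Finset.mem_filter.mpr ⟨singleton_mem_ncPartitions ⟨m, hm⟩, by simpa using hVm.symm⟩
    have hsmall : ∀ π ∈ P.erase {V},
        Tendsto (fun i => ∏ W ∈ π, κ (blockList (Function.update A m (a i)) W)) l (𝓝 0) := by
      intro π hπ
      obtain ⟨hπV, hπ⟩ := Finset.mem_erase.mp hπ
      obtain ⟨hπ, hmπ⟩ := Finset.mem_filter.mp hπ
      obtain ⟨hsp, -⟩ := mem_ncPartitions.mp hπ
      obtain ⟨W, hWπ, hmW, hWV, hW⟩ := hsp.exists_mem_ssubset_two_le_card hm hπV hmπ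
      set lim : Finset ℕ → ℂ := fun W' => if m ∈ W' then 0 else κ (blockList A W')
      have hlim := tendsto_finsetProd π
        (f := fun W' i => κ (blockList (Function.update A m (a i)) W')) (x := l) (a := lim)
        fun W' hW' => by
          by_cases hmW' : m ∈ W'
          · obtain rfl := hsp.eq_of_mem_of_mem hW' hWπ hmW' hmW
            simpa only [lim, if_pos hmW] using IH W' hWV (hWV.subset.trans hVT) hmW hW
          · simp only [lim, if_neg hmW', blockList_update_of_notMem A _ hmW', tendsto_const_nhds]
      rwa [Finset.prod_eq_zero (f := lim) hWπ (if_pos hmW)] at hlim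
    have hdecomp : ∀ i, κ (blockList (Function.update A m (a i)) V)
        = (ω (blockProd (Function.update A m (a i)) V) - ω (a i) * ω (blockProd A (V.erase m)))
          - ∑ π ∈ P.erase {V}, ∏ W ∈ π, κ (blockList (Function.update A m (a i)) W) := by
      intro i
      have hne : (V.erase m).Nonempty := by
        rw [← Finset.card_pos, Finset.card_erase_of_mem hm]
        omega
      rw [hκ.moment_update_sub_eq_sum A (a i) hm hne, ← Finset.add_sum_erase P _ hfull,
        Finset.prod_singleton, add_sub_cancel_right]
    simpa [← hdecomp] using (hcl V hVT hm).sub (tendsto_finsetSum _ hsmall)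

end IsFreeCumulantFamily


namespace IsState

variable [NormedRing 𝔘] [StarRing 𝔘] [NormedAlgebra ℂ 𝔘] {ω : 𝔘 →ₗ[ℂ] ℂ}

lemma map_star [StarModule ℂ 𝔘] (hω : IsState ω) (x : 𝔘) : ω (star x) = star (ω x) := by
  have hre := (hω.positive (1 + x)).2
  have him := (hω.positive (1 + Complex.I • x)).2
  have hx := (hω.positive x).2
  have e1 : star (1 + x) * (1 + x) = 1 + x + star x + star x * x := by
    rw [star_add, star_one]
    noncomm_ring
  have e2 : star (1 + Complex.I • x) * (1 + Complex.I • x)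
      = 1 + Complex.I • x - Complex.I • star x + star x * x := by
    rw [star_add, star_one, star_smul, RCLike.star_def, Complex.conj_I]
    simp only [add_mul, mul_add, one_mul, mul_one, smul_mul_smul, neg_mul, Complex.I_mul_I,
      neg_neg, one_smul, neg_smul]
    abel
  rw [e1, map_add, map_add, map_add, hω.unital] at hre
  rw [e2, map_add, map_sub, map_add, hω.unital, map_smul, map_smul, smul_eq_mul,
    smul_eq_mul] at him
  simp only [Complex.add_im, Complex.sub_im, Complex.one_im, Complex.mul_im, Complex.I_re,
    Complex.I_im, hx] at hre him
  apply Complex.ext <;> simp only [Complex.star_def, Complex.conj_re, Complex.conj_im] <;> linarith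

lemma tendsto_mul_map_sub [StarModule ℂ 𝔘] (hω : IsState ω) {ι : Type*} {l : Filter ι}
    (τ : ι → 𝔘 ≃⋆ₐ[ℂ] 𝔘)
    (hcl : ∀ A B : 𝔘, Tendsto (fun i => ω (τ i A * B) - ω (τ i A) * ω B) l (𝓝 0))
    (C D : 𝔘) : Tendsto (fun i => ω (C * τ i D) - ω C * ω (τ i D)) l (𝓝 0) := by
  have hstar := (hcl (star D) (star C)).star
  rw [star_zero] at hstar
  refine hstar.congr fun i => ?_
  simp only [star_sub, star_mul', ← hω.map_star, star_mul, StarHomClass.map_star, star_star,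
    mul_comm]

end IsState

theorem free_cumulant_clustering_general {G ι : Type*}
    [NormedRing 𝔘] [StarRing 𝔘] [NormedAlgebra ℂ 𝔘] [StarModule ℂ 𝔘]
    (α : G → 𝔘 ≃⋆ₐ[ℂ] 𝔘)
    (ω : 𝔘 →ₗ[ℂ] ℂ) (hω : IsState ω)
    (l : Filter ι) (g : ι → G)
    (κ : List 𝔘 → ℂ) (hκ : IsFreeCumulantFamily ⇑ω κ)
    (hcl : ∀ A B : 𝔘, Filter.Tendsto
      (fun i => ω (α (g i) A * B) - ω (α (g i) A) * ω B) l (𝓝 0)) :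
    ∀ n, 2 ≤ n → ∀ A : ℕ → 𝔘,
      Filter.Tendsto
        (fun i => κ (blockList (Function.update A 1 (α (g i) (A 1))) (Finset.Icc 1 n)))
        l (𝓝 0) ∧
      Filter.Tendsto
        (fun i => κ (blockList (Function.update A n (α (g i) (A n))) (Finset.Icc 1 n)))
        l (𝓝 0) := by
  intro n hn A
  have hcard : 2 ≤ (Finset.Icc 1 n).card := by simpa using hn
  constructor
  · refine hκ.tendsto_cumulant_update l A _ 1 (Finset.Icc 1 n) (fun V hV h1 => ?_) _
      subset_rfl (Finset.mem_Icc.mpr ⟨le_rfl, by omega⟩) hcard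
    simpa only [blockProd_update_of_forall_le A _ h1 fun x hx => (Finset.mem_Icc.mp (hV hx)).1]
      using hcl (A 1) (blockProd A (V.erase 1))
  · refine hκ.tendsto_cumulant_update l A _ n (Finset.Icc 1 n) (fun V hV hnV => ?_) _
      subset_rfl (Finset.mem_Icc.mpr ⟨by omega, le_rfl⟩) hcard
    simpa only [blockProd_update_of_forall_ge A _ hnV fun x hx => (Finset.mem_Icc.mp (hV hx)).2,
      mul_comm (ω (α _ (A n)))]
      using hω.tendsto_mul_map_sub (fun i => α (g i)) hcl (blockProd A (V.erase n)) (A n)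

/-- if the state is G-clustering along the net g^i, then every n-th free
cumulant with the first (or the last) argument translated vanishes along the net. -/
theorem free_cumulant_clustering {G ι : Type*} [Group G] [TopologicalSpace G] [IsTopologicalGroup G]
    [LocallyCompactSpace G]
    [NormedRing 𝔘] [StarRing 𝔘] [CStarRing 𝔘] [NormedAlgebra ℂ 𝔘] [StarModule ℂ 𝔘]
    [CompleteSpace 𝔘]
    (α : G → 𝔘 ≃⋆ₐ[ℂ] 𝔘) (hα : IsStarAutoRep α)
    (ω : 𝔘 →ₗ[ℂ] ℂ) (hω : IsState ω)
    (l : Filter ι) (g : ι → G)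
    (κ : List 𝔘 → ℂ) (hκ : IsFreeCumulantFamily ⇑ω κ)
    (hcl : ∀ A B : 𝔘, Filter.Tendsto
      (fun i => ω (α (g i) A * B) - ω (α (g i) A) * ω B) l (𝓝 0)) :
    ∀ n, 2 ≤ n → ∀ A : ℕ → 𝔘,
      Filter.Tendsto
        (fun i => κ (blockList (Function.update A 1 (α (g i) (A 1))) (Finset.Icc 1 n)))
        l (𝓝 0) ∧
      Filter.Tendsto
        (fun i => κ (blockList (Function.update A n (α (g i) (A n))) (Finset.Icc 1 n)))
        l (𝓝 0) :=
  free_cumulant_clustering_general α ω hω l g κ hκ hcl
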